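/- arXiv:1003.2139 — 2 statements merged into one kernel-verified Lean document; each statement's English description precedes it below -/
import Mathlib

section
/- Let S₋ and S₊ be real symmetric n×n matrices such that D := S₊ − S₋ is positive semidefinite, and let X, Y ∈ ℝⁿ satisfy, for every k ∈ ℝⁿ, (1/2)(⟨S₋k, k⟩ + ⟨S₋X, X⟩ − ⟨S₊(X−k), X−k⟩) ≤ ⟨Y, k⟩. Then ‖Y − (2S₊ − S₋)X‖ ≤ 2·√‖D‖·√⟨DX, X⟩, and moreover ‖Y − (2S₊ − S₋)X‖ ≤ 2‖D‖·‖P X‖, where P is the orthogonal projection of ℝⁿ onto the range of D. (This is the linear-algebra content of the paper's Theorem comparing contingent cones of weak KAM pseudographs of u₊ with the Green bundles, with S₋, S₊ the matrices of G₋, G₊.) -/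
open RealInnerProductSpace

/-!
Put `D = S₊ - S₋` and `q v = ⟨D v, v⟩`. Expanding the hypothesis gives `2 ⟨w, k⟩ ≤ q k + q X`
for all `k` with `w = S₊ X - Y`, and positivity of `D` gives the same for `w = D X`. Applied to
`t • k` for every real `t`, such an inequality says that a quadratic polynomial in `t` has
nonpositive discriminant, i.e. `|⟨w, k⟩| ≤ √(q X) √(q k) ≤ √(q X) √‖D‖ ‖k‖`. As
`Y - (2 S₊ - S₋) X = -(S₊ X - Y) - D X`, this bounds `⟨Y - (2 S₊ - S₋) X, k⟩` by
`2 √‖D‖ √(q X) ‖k‖`, whence the first estimate. For the second, `(range D)ᗮ = ker D` since `D` is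
symmetric, so `q X = q (P X) ≤ ‖D‖ ‖P X‖²`.
-/

section InnerProductSpace

variable {E : Type*} [NormedAddCommGroup E] [InnerProductSpace ℝ E]

theorem inner_sq_le_of_forall_two_mul_inner_le {T : E →ₗ[ℝ] E} {w : E} {β : ℝ}
    (h : ∀ k, 2 * ⟪w, k⟫ ≤ ⟪T k, k⟫ + β) (k : E) : ⟪w, k⟫ ^ 2 ≤ β * ⟪T k, k⟫ := by
  have hquad : ∀ t : ℝ, 0 ≤ ⟪T k, k⟫ * (t * t) + (-2 * ⟪w, k⟫) * t + β := by
    intro t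
    have := h (t • k)
    simp only [map_smul, real_inner_smul_left, real_inner_smul_right] at this
    linarith
  have := discrim_le_zero hquad
  rw [discrim] at this
  linarith

theorem abs_inner_le_of_forall_two_mul_inner_le {T : E →ₗ[ℝ] E} {w : E} {β : ℝ}
    (h : ∀ k, 2 * ⟪w, k⟫ ≤ ⟪T k, k⟫ + β) (k : E) : |⟪w, k⟫| ≤ √β * √⟪T k, k⟫ := by
  have hβ : 0 ≤ β := by simpa using h 0
  rw [← Real.sqrt_mul hβ]
  exact Real.abs_le_sqrt (inner_sq_le_of_forall_two_mul_inner_le h k)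

theorem LinearMap.IsPositive.abs_inner_le {T : E →ₗ[ℝ] E} (hT : T.IsPositive) (x k : E) :
    |⟪T x, k⟫| ≤ √⟪T x, x⟫ * √⟪T k, k⟫ := by
  refine abs_inner_le_of_forall_two_mul_inner_le (fun k ↦ ?_) k
  have hsymm : ⟪T k, x⟫ = ⟪T x, k⟫ := (hT.isSymmetric k x).trans (real_inner_comm _ _)
  have := hT.inner_nonneg_left (x - k)
  rw [map_sub, inner_sub_left, inner_sub_right, inner_sub_right, hsymm] at this
  linarith

theorem ContinuousLinearMap.sqrt_inner_map_self_le (T : E →L[ℝ] E) (k : E) :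
    √⟪T k, k⟫ ≤ √‖T‖ * ‖k‖ := by
  rw [← Real.sqrt_sq (norm_nonneg k), ← Real.sqrt_mul (norm_nonneg T)]
  refine Real.sqrt_le_sqrt ?_
  calc ⟪T k, k⟫ ≤ ‖T k‖ * ‖k‖ := real_inner_le_norm _ _
    _ ≤ ‖T‖ * ‖k‖ * ‖k‖ := by gcongr; exact T.le_opNorm k
    _ = ‖T‖ * ‖k‖ ^ 2 := by ring

theorem norm_le_of_forall_inner_le {z : E} {c : ℝ} (hc : 0 ≤ c)
    (h : ∀ k, ⟪z, k⟫ ≤ c * ‖k‖) : ‖z‖ ≤ c := by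
  rcases (norm_nonneg z).eq_or_lt with hz | hz
  · rw [← hz]
    exact hc
  · have := h z
    rw [real_inner_self_eq_norm_mul_norm] at this
    exact le_of_mul_le_mul_right this hz

theorem norm_sub_apply_le_of_forall_le_inner {Am Ap : E →L[ℝ] E}
    (hAp : (Ap : E →ₗ[ℝ] E).IsSymmetric) (hD : (Ap - Am).IsPositive) {X Y : E}
    (h : ∀ k, (1 / 2) * (⟪Am k, k⟫ + ⟪Am X, X⟫ - ⟪Ap (X - k), X - k⟫) ≤ ⟪Y, k⟫) :
    ‖Y - ((2 : ℝ) • Ap - Am) X‖ ≤ 2 * √‖Ap - Am‖ * √⟪(Ap - Am) X, X⟫ := by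
  set D := Ap - Am
  have hY : ∀ k, 2 * ⟪Ap X - Y, k⟫ ≤ ⟪D k, k⟫ + ⟪D X, X⟫ := by
    intro k
    have hsymm : ⟪Ap k, X⟫ = ⟪Ap X, k⟫ := (hAp k X).trans (real_inner_comm _ _)
    have := h k
    rw [map_sub, inner_sub_left, inner_sub_right, inner_sub_right, hsymm] at this
    simp only [D, sub_apply, inner_sub_left]
    linarith
  refine norm_le_of_forall_inner_le (by positivity) fun k ↦ ?_
  have hz : ⟪Y - ((2 : ℝ) • Ap - Am) X, k⟫ = -⟪Ap X - Y, k⟫ - ⟪D X, k⟫ := by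
    simp only [D, sub_apply, inner_sub_left, two_smul, add_apply, inner_add_left]
    ring
  have hk := D.sqrt_inner_map_self_le k
  calc ⟪Y - ((2 : ℝ) • Ap - Am) X, k⟫ = -⟪Ap X - Y, k⟫ - ⟪D X, k⟫ := hz
    _ ≤ |⟪Ap X - Y, k⟫| + |⟪D X, k⟫| := by
      linarith [neg_abs_le ⟪Ap X - Y, k⟫, neg_abs_le ⟪D X, k⟫]
    _ ≤ √⟪D X, X⟫ * √⟪D k, k⟫ + √⟪D X, X⟫ * √⟪D k, k⟫ :=
      add_le_add (abs_inner_le_of_forall_two_mul_inner_le (T := D) hY k)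
        (hD.toLinearMap.abs_inner_le X k)
    _ ≤ 2 * √‖D‖ * √⟪D X, X⟫ * ‖k‖ := by
      nlinarith [mul_le_mul_of_nonneg_left hk (Real.sqrt_nonneg ⟪D X, X⟫)]

end InnerProductSpace

theorem LinearMap.IsSymmetric.inner_map_starProjection_range {𝕜 E : Type*} [RCLike 𝕜]
    [NormedAddCommGroup E] [InnerProductSpace 𝕜 E] {T : E →ₗ[𝕜] E} (hT : T.IsSymmetric)
    [(LinearMap.range T).HasOrthogonalProjection] (x : E) :
    inner 𝕜 (T ((LinearMap.range T).starProjection x)) ((LinearMap.range T).starProjection x) =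
      inner 𝕜 (T x) x := by
  have hTp : T ((LinearMap.range T).starProjection x) = T x := by
    have := Submodule.sub_starProjection_mem_orthogonal (K := LinearMap.range T) x
    rw [hT.orthogonal_range, LinearMap.mem_ker, map_sub, sub_eq_zero] at this
    exact this.symm
  rw [hTp, hT x, hTp, hT x x]

open Matrix

/-- linear-algebra content of the comparison between contingent cones of
weak KAM pseudographs of `u₊` and the Green bundles. -/
theorem stmt_1 {n : ℕ} (Sm Sp : Matrix (Fin n) (Fin n) ℝ)
    (hSm : Sm.IsSymm) (hSp : Sp.IsSymm)
    (hD : ∀ v : EuclideanSpace ℝ (Fin n), 0 ≤ ⟪Matrix.toEuclideanLin (Sp - Sm) v, v⟫)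
    (X Y : EuclideanSpace ℝ (Fin n))
    (h : ∀ k : EuclideanSpace ℝ (Fin n),
      (1 / 2) * (⟪Matrix.toEuclideanLin Sm k, k⟫
        + ⟪Matrix.toEuclideanLin Sm X, X⟫
        - ⟪Matrix.toEuclideanLin Sp (X - k), X - k⟫) ≤ ⟪Y, k⟫) :
    ‖Y - Matrix.toEuclideanLin ((2 : ℝ) • Sp - Sm) X‖
      ≤ 2 * Real.sqrt ‖Matrix.toEuclideanCLM (𝕜 := ℝ) (Sp - Sm)‖
          * Real.sqrt ⟪Matrix.toEuclideanLin (Sp - Sm) X, X⟫ ∧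
    ‖Y - Matrix.toEuclideanLin ((2 : ℝ) • Sp - Sm) X‖
      ≤ 2 * ‖Matrix.toEuclideanCLM (𝕜 := ℝ) (Sp - Sm)‖
          * ‖(Submodule.orthogonalProjectionOnto (LinearMap.range (Matrix.toEuclideanLin (Sp - Sm))) X :
              EuclideanSpace ℝ (Fin n))‖ := by
  have hSymm {A : Matrix (Fin n) (Fin n) ℝ} (hA : A.IsSymm) : A.toEuclideanLin.IsSymmetric :=
    isSymmetric_toEuclideanLin_iff.2 (isHermitian_iff_isSymm.2 hA)
  set D := toEuclideanCLM (𝕜 := ℝ) (n := Fin n) (Sp - Sm)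
  have hDpos : D.IsPositive := (LinearMap.isPositive_iff _).2 ⟨hSymm (hSp.sub hSm), hD⟩
  have hfirst : ‖Y - toEuclideanLin ((2 : ℝ) • Sp - Sm) X‖ ≤ 2 * √‖D‖ * √⟪D X, X⟫ := by
    have := norm_sub_apply_le_of_forall_le_inner (Am := toEuclideanCLM (𝕜 := ℝ) (n := Fin n) Sm)
      (Ap := toEuclideanCLM (𝕜 := ℝ) (n := Fin n) Sp) (hSymm hSp) (by rwa [← map_sub]) h
    rwa [← map_sub, ← map_smul, ← map_sub] at this
  refine ⟨hfirst, hfirst.trans ?_⟩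
  set p := (LinearMap.range (toEuclideanLin (Sp - Sm))).starProjection X
  have hDX : √⟪D X, X⟫ ≤ √‖D‖ * ‖p‖ := by
    have hDp : ⟪D p, p⟫ = ⟪D X, X⟫ := (hSymm (hSp.sub hSm)).inner_map_starProjection_range X
    exact hDp ▸ D.sqrt_inner_map_self_le p
  calc 2 * √‖D‖ * √⟪D X, X⟫ ≤ 2 * √‖D‖ * (√‖D‖ * ‖p‖) := by gcongr
    _ = 2 * ‖D‖ * ‖p‖ := by rw [← mul_assoc, mul_assoc 2, Real.mul_self_sqrt (norm_nonneg _)]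
end

section
/- Let E be a real normed vector space, K ≥ 0, and u₋, u₊ : E → ℝ with u₊(z) ≤ u₋(z) for all z ∈ E. Let y ∈ E satisfy u₋(y) = u₊(y). Suppose p is a K-super-differential of u₋ at y and q is a K-sub-differential of u₊ at y. Then p = q, and both u₋ and u₊ are Fréchet differentiable at y with derivative p. (Differentiability of a conjugate pair of weak KAM solutions at points of their contact set I(u₋, u₊), in the form used in the paper.) -/
/-!
Adding the sub-differential inequality of `u₊` to the super-differential inequality of `u₋`
and using `u₊ ≤ u₋` with equality at `y` gives `|q h - p h| ≤ 2K‖h‖²`, so the linear map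
`q` has derivative `p` at `0` and hence `p = q`. Then `u₋` and `u₊` are squeezed between
`h ↦ u(y) + p h ∓ K‖h‖²`, which are tangent to each other at `y`.
-/

open Asymptotics Filter Topology

section QuadraticBound

variable {𝕜 E F : Type*} [NontriviallyNormedField 𝕜] [NormedAddCommGroup E] [NormedSpace 𝕜 E]
  [NormedAddCommGroup F] [NormedSpace 𝕜 F]

theorem hasFDerivAt_of_norm_sub_le_sq {f : E → F} {L : E →L[𝕜] F} {x : E} {C : ℝ}
    (hf : ∀ h, ‖f (x + h) - f x - L h‖ ≤ C * ‖h‖ ^ 2) : HasFDerivAt f L x := by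
  rw [hasFDerivAt_iff_isLittleO_nhds_zero]
  have hO : (fun h => f (x + h) - f x - L h) =O[𝓝 0] fun h : E => ‖h‖ ^ 2 :=
    IsBigO.of_bound C (Eventually.of_forall fun h => by simpa using hf h)
  exact hO.trans_isLittleO (isLittleO_norm_pow_id one_lt_two)

theorem ContinuousLinearMap.eq_of_norm_sub_le_sq {p q : E →L[𝕜] F} {C : ℝ}
    (hpq : ∀ h, ‖q h - p h‖ ≤ C * ‖h‖ ^ 2) : p = q :=
  (hasFDerivAt_of_norm_sub_le_sq (x := 0) (by simpa using hpq)).unique q.hasFDerivAt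

end QuadraticBound

section SemiDifferentials

variable {E : Type*} [NormedAddCommGroup E] [NormedSpace ℝ E]

def IsSuperdifferential (K : ℝ) (u : E → ℝ) (x : E) (p : E →L[ℝ] ℝ) : Prop :=
  ∀ h, u (x + h) ≤ u x + p h + K * ‖h‖ ^ 2

def IsSubdifferential (K : ℝ) (u : E → ℝ) (x : E) (q : E →L[ℝ] ℝ) : Prop :=
  ∀ h, u x + q h - K * ‖h‖ ^ 2 ≤ u (x + h)

variable {K : ℝ} {u v : E → ℝ} {x : E} {p q : E →L[ℝ] ℝ}

theorem IsSuperdifferential.of_le (hp : IsSuperdifferential K u x p) (hle : ∀ z, v z ≤ u z)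
    (heq : u x = v x) : IsSuperdifferential K v x p := fun h => by
  linarith [hp h, hle (x + h)]

theorem IsSubdifferential.of_le (hq : IsSubdifferential K v x q) (hle : ∀ z, v z ≤ u z)
    (heq : u x = v x) : IsSubdifferential K u x q := fun h => by
  linarith [hq h, hle (x + h)]

theorem IsSuperdifferential.eq_of_isSubdifferential (hp : IsSuperdifferential K u x p)
    (hq : IsSubdifferential K u x q) : p = q := by
  have hsub : ∀ h, q h - p h ≤ 2 * K * ‖h‖ ^ 2 := fun h => by linarith [hp h, hq h]
  refine ContinuousLinearMap.eq_of_norm_sub_le_sq (C := 2 * K) fun h => ?_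
  have hneg := hsub (-h)
  rw [map_neg, map_neg, norm_neg] at hneg
  rw [Real.norm_eq_abs, abs_le]
  constructor <;> linarith [hsub h]

theorem IsSuperdifferential.hasFDerivAt (hp : IsSuperdifferential K u x p)
    (hq : IsSubdifferential K u x p) : HasFDerivAt u p x :=
  hasFDerivAt_of_norm_sub_le_sq (C := K) fun h => by
    rw [Real.norm_eq_abs, abs_le]
    constructor <;> linarith [hp h, hq h]

end SemiDifferentials

theorem stmt_11_general {E : Type*} [NormedAddCommGroup E] [NormedSpace ℝ E]
    (K : ℝ) (um up : E → ℝ) (hle : ∀ z : E, up z ≤ um z)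
    (y : E) (heq : um y = up y) (p q : E →L[ℝ] ℝ)
    (hp : ∀ h : E, um (y + h) ≤ um y + p h + K * ‖h‖ ^ 2)
    (hq : ∀ h : E, up y + q h - K * ‖h‖ ^ 2 ≤ up (y + h)) :
    p = q ∧ HasFDerivAt um p y ∧ HasFDerivAt up p y := by
  have hp : IsSuperdifferential K um y p := hp
  have hq : IsSubdifferential K up y q := hq
  obtain rfl : p = q := hp.eq_of_isSubdifferential (hq.of_le hle heq)
  exact ⟨rfl, hp.hasFDerivAt (hq.of_le hle heq), (hp.of_le hle heq).hasFDerivAt hq⟩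

/-- if `u₊ ≤ u₋` with equality at `y`, `p` is a `K`-super-differential of
`u₋` at `y` and `q` is a `K`-sub-differential of `u₊` at `y`, then `p = q` and both `u₋`
and `u₊` are Fréchet differentiable at `y` with derivative `p`. -/
theorem stmt_11 {E : Type*} [NormedAddCommGroup E] [NormedSpace ℝ E]
    (K : ℝ) (hK : 0 ≤ K) (um up : E → ℝ) (hle : ∀ z : E, up z ≤ um z)
    (y : E) (heq : um y = up y) (p q : E →L[ℝ] ℝ)
    (hp : ∀ h : E, um (y + h) ≤ um y + p h + K * ‖h‖ ^ 2)
    (hq : ∀ h : E, up y + q h - K * ‖h‖ ^ 2 ≤ up (y + h)) :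
    p = q ∧ HasFDerivAt um p y ∧ HasFDerivAt up p y :=
  stmt_11_general K um up hle y heq p q hp hq
end
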